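/- arXiv:1805.05064 — 3 statements merged into one kernel-verified Lean document; each statement's English description precedes it below -/
import Mathlib

section
/- For the Lamb-Oseen vortex, the function J(r) = r⁴ e^{-r²}(1-e^{-r²}) / (1-(1+r²)e^{-r²})² is strictly decreasing on (0,∞), i.e. J'(r) < 0 for all r > 0. -/
/-!
With `t = r²` and `u = e^{-t}` one has `J(r) = K(t)`, `K(t) = t² u (1 - u) / D(t)²`,
`D(t) = 1 - (1 + t) u > 0`, and the quotient rule gives `K'(t) = t u² G(t) / D(t)³` with
`G(t) = (2 - t) eᵗ + 2 e^{-t} - t² + t - 4`. Now `G(0) = G'(0) = 0` and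
`G''(t) = 2 (e^{-t} - 1) - t eᵗ < 0` for `t > 0`, so `G < 0` on `(0, ∞)`, and hence
`K' < 0` there.
-/

open Real Set

theorem lt_of_hasDerivAt_neg {f f' : ℝ → ℝ} {a x : ℝ} (hf : ∀ y, HasDerivAt f (f' y) y)
    (hf' : ∀ y ∈ Ioi a, f' y < 0) (hx : a < x) : f x < f a := by
  have hanti : StrictAntiOn f (Ici a) := by
    refine strictAntiOn_of_hasDerivWithinAt_neg (convex_Ici a)
      (fun y _ => (hf y).continuousAt.continuousWithinAt)
      (fun y _ => (hf y).hasDerivWithinAt) ?_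
    rwa [interior_Ici]
  exact hanti self_mem_Ici hx.le hx

namespace LambOseen

noncomputable def denom (t : ℝ) : ℝ := 1 - (1 + t) * exp (-t)

noncomputable def K (t : ℝ) : ℝ := t ^ 2 * exp (-t) * (1 - exp (-t)) / denom t ^ 2

noncomputable def G (t : ℝ) : ℝ := (2 - t) * exp t + 2 * exp (-t) - t ^ 2 + t - 4

noncomputable def derivG (t : ℝ) : ℝ := (1 - t) * exp t - 2 * exp (-t) + 1 - 2 * t

noncomputable def derivK (t : ℝ) : ℝ := t * exp (-t) ^ 2 * G t / denom t ^ 3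

theorem denom_pos {t : ℝ} (ht : 0 < t) : 0 < denom t := by
  have hlt : t + 1 < exp t := add_one_lt_exp ht.ne'
  have hinv : exp (-t) * exp t = 1 := by rw [← exp_add, neg_add_cancel, exp_zero]
  unfold denom
  nlinarith [exp_pos (-t)]

theorem hasDerivAt_derivG (t : ℝ) : HasDerivAt derivG (2 * exp (-t) - 2 - t * exp t) t :=
  ((((((hasDerivAt_id' t).const_sub 1).mul (hasDerivAt_exp t)).sub
    ((hasDerivAt_neg t).exp.const_mul 2)).add_const 1).sub
      ((hasDerivAt_id' t).const_mul 2)).congr_deriv (by ring)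

theorem hasDerivAt_G (t : ℝ) : HasDerivAt G (derivG t) t :=
  ((((((hasDerivAt_id' t).const_sub 2).mul (hasDerivAt_exp t)).add
    ((hasDerivAt_neg t).exp.const_mul 2)).sub (hasDerivAt_pow 2 t)).add
      (hasDerivAt_id' t)).sub_const 4 |>.congr_deriv (by simp only [derivG]; ring)

theorem derivG_neg {t : ℝ} (ht : 0 < t) : derivG t < 0 := by
  have hderiv_neg : ∀ s ∈ Ioi (0 : ℝ), 2 * exp (-s) - 2 - s * exp s < 0 := by
    intro s (hs : 0 < s)
    have hexp_lt : exp (-s) < 1 := exp_lt_one_iff.mpr (neg_lt_zero.mpr hs)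
    linarith [mul_pos hs (exp_pos s)]
  have hzero : derivG 0 = 0 := by norm_num [derivG]
  simpa [hzero] using lt_of_hasDerivAt_neg hasDerivAt_derivG hderiv_neg ht

theorem G_neg {t : ℝ} (ht : 0 < t) : G t < 0 := by
  have hzero : G 0 = 0 := by norm_num [G]
  simpa [hzero] using lt_of_hasDerivAt_neg hasDerivAt_G (fun s (hs : 0 < s) => derivG_neg hs) ht

theorem hasDerivAt_K {t : ℝ} (ht : denom t ≠ 0) :
    HasDerivAt K (derivK t) t := by
  have hexp := (hasDerivAt_neg t).exp
  have hnum := ((hasDerivAt_pow 2 t).mul hexp).mul (hexp.const_sub 1)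
  have hden := ((((hasDerivAt_id' t).const_add 1).mul hexp).const_sub 1).pow 2
  refine (hnum.div hden (pow_ne_zero 2 ht)).congr_deriv ?_
  have hG : exp (-t) * G t = 2 * exp (-t) ^ 2 + (t - t ^ 2 - 4) * exp (-t) + (2 - t) := by
    rw [G, exp_neg]; field_simp; ring
  simp only [derivK, Pi.mul_apply, Pi.pow_apply, show 1 - (1 + t) * exp (-t) = denom t from rfl]
  rw [pow_two (exp (-t)), mul_assoc t, mul_assoc (exp (-t)), hG]
  field_simp
  rw [denom]
  ring

theorem derivK_neg {t : ℝ} (ht : 0 < t) : derivK t < 0 :=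
  div_neg_of_neg_of_pos (mul_neg_of_pos_of_neg (by positivity) (G_neg ht))
    (pow_pos (denom_pos ht) 3)

theorem strictAntiOn_K : StrictAntiOn K (Ioi 0) := by
  have hK : ∀ t ∈ Ioi (0 : ℝ), HasDerivAt K (derivK t) t :=
    fun t (ht : 0 < t) => hasDerivAt_K (denom_pos ht).ne'
  refine strictAntiOn_of_hasDerivWithinAt_neg (f' := derivK) (convex_Ioi 0)
    (fun t ht => (hK t ht).continuousAt.continuousWithinAt) ?_ ?_ <;> rw [interior_Ioi]
  · exact fun t ht => (hK t ht).hasDerivWithinAt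
  · exact fun t (ht : 0 < t) => derivK_neg ht

end LambOseen

open LambOseen in
/-- For the Lamb-Oseen vortex, the function
J(r) = r⁴ e^{-r²}(1-e^{-r²}) / (1-(1+r²)e^{-r²})² is strictly decreasing on (0,∞),
i.e. J'(r) < 0 for all r > 0. -/
theorem lamb_oseen_J_strict_anti :
    (∀ r : ℝ, 0 < r →
      deriv (fun x : ℝ =>
        x ^ 4 * Real.exp (-x ^ 2) * (1 - Real.exp (-x ^ 2)) /
          (1 - (1 + x ^ 2) * Real.exp (-x ^ 2)) ^ 2) r < 0) ∧
    StrictAntiOn (fun x : ℝ =>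
        x ^ 4 * Real.exp (-x ^ 2) * (1 - Real.exp (-x ^ 2)) /
          (1 - (1 + x ^ 2) * Real.exp (-x ^ 2)) ^ 2) (Set.Ioi 0) := by
  have hJ : (fun x : ℝ => x ^ 4 * Real.exp (-x ^ 2) * (1 - Real.exp (-x ^ 2)) /
      (1 - (1 + x ^ 2) * Real.exp (-x ^ 2)) ^ 2) = K ∘ fun x => x ^ 2 := by
    funext x
    simp only [Function.comp, K, denom]
    ring
  rw [hJ]
  refine ⟨fun r hr => ?_, strictAntiOn_K.comp_strictMonoOn
    (fun a ha _ _ hab => pow_lt_pow_left₀ hab (le_of_lt ha) two_ne_zero)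
    (fun x (hx : 0 < x) => show 0 < x ^ 2 by positivity)⟩
  have hr2 : 0 < r ^ 2 := by positivity
  rw [((hasDerivAt_K (denom_pos hr2).ne').comp (h := fun x => x ^ 2) r
    (hasDerivAt_pow 2 r)).deriv]
  exact mul_neg_of_neg_of_pos (derivK_neg hr2) (by positivity)
end

section
/- Let Ω be as in the reconstruction setting and W = rΩ' + 2Ω. Then W(r) = Ω(r)·(2 - 4r/(r + √(r² + 4J(r)))) for all r > 0, where J = 2ΩW/(Ω')². -/
open Set

/-- Let Ω be as in the reconstruction setting and W = rΩ' + 2Ω. Then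
W(r) = Ω(r)(2 - 4r/(r + √(r² + 4J(r)))) for all r > 0, where J = 2ΩW/(Ω')². -/
theorem vorticity_reconstruction (Ω : ℝ → ℝ)
    (hΩdiff : ∀ r : ℝ, 0 < r → DifferentiableAt ℝ Ω r)
    (hΩpos : ∀ r : ℝ, 0 < r → 0 < Ω r)
    (hΩ' : ∀ r : ℝ, 0 < r → deriv Ω r < 0)
    (hWpos : ∀ r : ℝ, 0 < r → 0 < r * deriv Ω r + 2 * Ω r) :
    ∀ r : ℝ, 0 < r →
      r * deriv Ω r + 2 * Ω r
        = Ω r * (2 - 4 * r / (r + Real.sqrt (r ^ 2 +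
            4 * (2 * Ω r * (r * deriv Ω r + 2 * Ω r) / (deriv Ω r) ^ 2)))) := by
  intro r hr
  set a := Ω r with ha
  set d := deriv Ω r with hd
  have hapos : 0 < a := hΩpos r hr
  have hdneg : d < 0 := hΩ' r hr
  have hW : 0 < r * d + 2 * a := hWpos r hr
  have hdne : d ≠ 0 := ne_of_lt hdneg
  have hnum : 0 < r * d + 4 * a := by nlinarith
  have hsq : r ^ 2 + 4 * (2 * a * (r * d + 2 * a) / d ^ 2)
      = ((r * d + 4 * a) / (-d)) ^ 2 := by
    field_simp
    ring
  rw [hsq, Real.sqrt_sq (div_nonneg hnum.le (by linarith))]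
  have hden : r + (r * d + 4 * a) / (-d) = 4 * a / (-d) := by
    rw [eq_div_iff (neg_ne_zero.mpr hdne), add_mul, div_mul_cancel₀ _ (neg_ne_zero.mpr hdne)]
    ring
  rw [hden]
  field_simp
  ring
end

section
/- Fix k > 0 and c ≠ 0. For every v in the Sobolev space H¹([-1,1]) and every ε > 0 small enough (depending only on k and a universal Sobolev constant, not on c), the quadratic form Q(v) = ∫_{-1}^{1} ( |v'(s)|² + (k² - ε s/(c² + s²)) |v(s)|² ) ds satisfies Q(v) ≥ 0, with Q(v) > 0 unless v = 0. -/
/-!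
Write `Q(v) = ∫ |v'|² + k² ∫ |v|² - ε J` with `J = ∫ s / (c² + s²) |v(s)|² ds`. Everything rests on
the bound `|J| ≤ 8 (∫ |v|² + ∫ |v'|²)`, uniform in `c`: then `8 ε < min 1 k²` gives
`Q(v) ≥ (k² - 8 ε) ∫ |v|²`. The weight is odd, so `J` only sees `|v(s)|² - |v(0)|²`, which is
`O(√|s|)` by the Sobolev bound on `sup |v|` and Cauchy–Schwarz for `v'`. Against
`|s / (c² + s²)| ≤ 1 / |s|` this leaves the integrable singularity `|s|^(-1/2)`, whatever `c` is.
-/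

open Set intervalIntegral

open MeasureTheory (volume)

theorem sq_intervalIntegral_le_mul_intervalIntegral_sq {a b : ℝ} (hab : a ≤ b) {f : ℝ → ℝ}
    (hf : Continuous f) : (∫ x in a..b, f x) ^ 2 ≤ (b - a) * ∫ x in a..b, f x ^ 2 := by
  have hquad : ∀ t : ℝ,
      0 ≤ (b - a) * (t * t) + (-2 * ∫ x in a..b, f x) * t + ∫ x in a..b, f x ^ 2 := by
    intro t
    have hexpand : ∫ x in a..b, (f x - t) ^ 2
        = (b - a) * (t * t) + (-2 * ∫ x in a..b, f x) * t + ∫ x in a..b, f x ^ 2 := by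
      have h1 : IntervalIntegrable (fun x => f x ^ 2) volume a b :=
        (hf.pow 2).intervalIntegrable a b
      have h2 := ((hf.intervalIntegrable (μ := volume) a b).const_mul 2).mul_const t
      simp_rw [sub_sq]
      rw [integral_add (h1.sub h2) intervalIntegrable_const, integral_sub h1 h2,
        integral_mul_const, integral_const_mul, integral_const, smul_eq_mul]
      ring
    exact hexpand ▸ integral_nonneg hab fun x _ => sq_nonneg _
  have := discrim_le_zero hquad
  rw [discrim] at this
  linarith

theorem intervalIntegral_eq_zero_of_odd {f : ℝ → ℝ} (hf : ∀ x, f (-x) = -f x) (a : ℝ) :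
    ∫ x in -a..a, f x = 0 := by
  have h := integral_comp_neg (a := -a) (b := a) f
  simp only [hf, integral_neg, neg_neg] at h
  linarith

theorem intervalIntegrable_abs_rpow {r : ℝ} (hr : -1 < r) (a b : ℝ) :
    IntervalIntegrable (fun s : ℝ => |s| ^ r) volume a b := by
  refine intervalIntegrable_of_even (fun x => by rw [abs_neg]) (fun x hx => ?_)
  refine (intervalIntegral.intervalIntegrable_rpow' hr).congr fun s hs => ?_
  rw [uIoc_of_le hx.le] at hs
  simp [abs_of_pos hs.1]

theorem integral_abs_rpow {r : ℝ} (hr : -1 < r) :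
    ∫ s in (-1 : ℝ)..1, |s| ^ r = 2 / (r + 1) := by
  have hpos : ∫ s in (0 : ℝ)..1, |s| ^ r = 1 / (r + 1) := by
    rw [integral_congr (g := fun s => s ^ r) fun s hs => by
      rw [uIcc_of_le zero_le_one] at hs; simp only [abs_of_nonneg hs.1],
      integral_rpow (Or.inl hr), Real.one_rpow, Real.zero_rpow (by linarith)]
    ring
  have hneg : ∫ s in (-1 : ℝ)..0, |s| ^ r = 1 / (r + 1) := by
    have h := integral_comp_neg (a := 0) (b := 1) fun s : ℝ => |s| ^ r
    simp only [abs_neg, neg_zero] at h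
    rw [← h, hpos]
  rw [← integral_add_adjacent_intervals (b := 0) (intervalIntegrable_abs_rpow hr _ _)
    (intervalIntegrable_abs_rpow hr _ _), hpos, hneg]
  ring

theorem abs_div_sq_add_sq_le_inv_abs (c s : ℝ) : |s / (c ^ 2 + s ^ 2)| ≤ |s|⁻¹ := by
  rcases eq_or_ne s 0 with rfl | hs
  · simp
  rw [abs_div, abs_of_pos (by positivity : 0 < c ^ 2 + s ^ 2), ← one_div,
    div_le_div_iff₀ (by positivity) (abs_pos.mpr hs)]
  nlinarith [sq_abs s, sq_nonneg c]

section

variable {E : Type*} [NormedAddCommGroup E] [InnerProductSpace ℝ E] {v : ℝ → E}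

theorem abs_norm_sq_sub_norm_sq_le_integral (hv : ContDiff ℝ 1 v) {x y : ℝ} (hxy : x ≤ y) :
    |‖v y‖ ^ 2 - ‖v x‖ ^ 2| ≤ ∫ t in x..y, 2 * (‖v t‖ * ‖deriv v t‖) := by
  have hderiv : ∀ t, HasDerivAt (fun t => ‖v t‖ ^ 2) (2 * inner ℝ (v t) (deriv v t)) t :=
    fun t => ((hv.differentiable one_ne_zero) t).hasDerivAt.norm_sq
  have hcont : Continuous fun t => 2 * inner ℝ (v t) (deriv v t) :=
    continuous_const.mul (hv.continuous.inner (hv.continuous_deriv le_rfl))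
  rw [← integral_eq_sub_of_hasDerivAt (fun t _ => hderiv t) (hcont.intervalIntegrable _ _)]
  refine (abs_integral_le_integral_abs hxy).trans <| integral_mono_on hxy
    (hcont.abs.intervalIntegrable _ _) ?_ fun t _ => ?_
  · exact (continuous_const.mul (hv.continuous.norm.mul
      (hv.continuous_deriv le_rfl).norm)).intervalIntegrable _ _
  · rw [abs_mul, abs_two]
    exact mul_le_mul_of_nonneg_left (abs_real_inner_le_norm _ _) zero_le_two

theorem abs_norm_sq_sub_norm_sq_le_integral_sq (hv : ContDiff ℝ 1 v) {a b x y : ℝ}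
    (hx : x ∈ Icc a b) (hy : y ∈ Icc a b) :
    |‖v y‖ ^ 2 - ‖v x‖ ^ 2| ≤ ∫ t in a..b, (‖v t‖ ^ 2 + ‖deriv v t‖ ^ 2) := by
  wlog hxy : x ≤ y generalizing x y
  · rw [abs_sub_comm]; exact this hy hx (le_of_not_ge hxy)
  have hcont : Continuous fun t => ‖v t‖ ^ 2 + ‖deriv v t‖ ^ 2 :=
    (hv.continuous.norm.pow 2).add ((hv.continuous_deriv le_rfl).norm.pow 2)
  calc |‖v y‖ ^ 2 - ‖v x‖ ^ 2| ≤ ∫ t in x..y, 2 * (‖v t‖ * ‖deriv v t‖) :=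
        abs_norm_sq_sub_norm_sq_le_integral hv hxy
    _ ≤ ∫ t in x..y, (‖v t‖ ^ 2 + ‖deriv v t‖ ^ 2) :=
        integral_mono_on hxy ((continuous_const.mul (hv.continuous.norm.mul
          (hv.continuous_deriv le_rfl).norm)).intervalIntegrable _ _)
          (hcont.intervalIntegrable _ _)
          fun t _ => (mul_assoc _ _ _).symm.trans_le (two_mul_le_add_sq _ _)
    _ ≤ ∫ t in a..b, (‖v t‖ ^ 2 + ‖deriv v t‖ ^ 2) :=
        integral_mono_interval hx.1 hxy hy.2 (.of_forall fun t => by positivity)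
          (hcont.intervalIntegrable _ _)

theorem mul_norm_sq_le_of_contDiff (hv : ContDiff ℝ 1 v) {a b t : ℝ} (ht : t ∈ Icc a b) :
    (b - a) * ‖v t‖ ^ 2 ≤ (1 + (b - a)) * (∫ s in a..b, ‖v s‖ ^ 2)
      + (b - a) * ∫ s in a..b, ‖deriv v s‖ ^ 2 := by
  have hab : a ≤ b := ht.1.trans ht.2
  have hN : IntervalIntegrable (fun s => ‖v s‖ ^ 2) volume a b :=
    (hv.continuous.norm.pow 2).intervalIntegrable a b
  have hD : IntervalIntegrable (fun s => ‖deriv v s‖ ^ 2) volume a b :=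
    ((hv.continuous_deriv le_rfl).norm.pow 2).intervalIntegrable a b
  have hpoint : ∀ τ ∈ Icc a b,
      ‖v t‖ ^ 2 ≤ ‖v τ‖ ^ 2 + ∫ s in a..b, (‖v s‖ ^ 2 + ‖deriv v s‖ ^ 2) := fun τ hτ => by
    linarith [le_abs_self (‖v t‖ ^ 2 - ‖v τ‖ ^ 2), abs_norm_sq_sub_norm_sq_le_integral_sq hv hτ ht]
  have := integral_mono_on hab intervalIntegrable_const (hN.add intervalIntegrable_const) hpoint
  rw [integral_add hN intervalIntegrable_const, integral_const, integral_const,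
    integral_add hN hD, smul_eq_mul, smul_eq_mul] at this
  linarith

theorem abs_norm_sq_sub_norm_sq_le_sqrt (hv : ContDiff ℝ 1 v) {a b x y M : ℝ}
    (hx : x ∈ Icc a b) (hy : y ∈ Icc a b) (hM : ∀ t ∈ Icc a b, ‖v t‖ ≤ M) :
    |‖v y‖ ^ 2 - ‖v x‖ ^ 2| ≤ 2 * M * √|y - x| * √(∫ t in a..b, ‖deriv v t‖ ^ 2) := by
  wlog hxy : x ≤ y generalizing x y
  · rw [abs_sub_comm, abs_sub_comm y]; exact this hy hx (le_of_not_ge hxy)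
  have hv' := (hv.continuous_deriv le_rfl).norm
  have hM0 : 0 ≤ M := (norm_nonneg _).trans (hM x hx)
  have hcs : ∫ t in x..y, ‖deriv v t‖ ≤ √|y - x| * √(∫ t in a..b, ‖deriv v t‖ ^ 2) := by
    rw [abs_of_nonneg (sub_nonneg.mpr hxy), ← Real.sqrt_mul (sub_nonneg.mpr hxy)]
    refine (le_abs_self _).trans (Real.abs_le_sqrt ?_)
    calc _ ≤ (y - x) * ∫ t in x..y, ‖deriv v t‖ ^ 2 :=
          sq_intervalIntegral_le_mul_intervalIntegral_sq hxy hv'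
      _ ≤ _ := mul_le_mul_of_nonneg_left (integral_mono_interval hx.1 hxy hy.2
          (.of_forall fun t => by positivity) ((hv'.pow 2).intervalIntegrable _ _))
          (sub_nonneg.mpr hxy)
  calc |‖v y‖ ^ 2 - ‖v x‖ ^ 2| ≤ ∫ t in x..y, 2 * (‖v t‖ * ‖deriv v t‖) :=
        abs_norm_sq_sub_norm_sq_le_integral hv hxy
    _ ≤ ∫ t in x..y, 2 * M * ‖deriv v t‖ :=
        integral_mono_on hxy
          ((continuous_const.mul (hv.continuous.norm.mul hv')).intervalIntegrable _ _)
          ((continuous_const.mul hv').intervalIntegrable _ _) fun t ht => by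
            rw [mul_assoc]
            gcongr
            exact hM t ⟨hx.1.trans ht.1, ht.2.trans hy.2⟩
    _ = 2 * M * ∫ t in x..y, ‖deriv v t‖ := integral_const_mul _ _
    _ ≤ _ := by rw [mul_assoc (2 * M)]; gcongr

theorem abs_weight_mul_sub_norm_sq_le (hv : ContDiff ℝ 1 v) (c : ℝ) {s M : ℝ}
    (hs : s ∈ Icc (-1 : ℝ) 1) (hM : ∀ t ∈ Icc (-1 : ℝ) 1, ‖v t‖ ≤ M) :
    |s / (c ^ 2 + s ^ 2) * (‖v s‖ ^ 2 - ‖v 0‖ ^ 2)|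
      ≤ 2 * M * √(∫ t in (-1 : ℝ)..1, ‖deriv v t‖ ^ 2) * |s| ^ (-(1 / 2) : ℝ) := by
  have hroot : |s|⁻¹ * √|s| = |s| ^ (-(1 / 2) : ℝ) := by
    rw [Real.rpow_neg (abs_nonneg s), ← Real.sqrt_eq_rpow, inv_mul_eq_div,
      Real.sqrt_div_self', one_div]
  have hM0 : 0 ≤ M := (norm_nonneg _).trans (hM 0 (by norm_num))
  calc |s / (c ^ 2 + s ^ 2) * (‖v s‖ ^ 2 - ‖v 0‖ ^ 2)|
      = |s / (c ^ 2 + s ^ 2)| * |‖v s‖ ^ 2 - ‖v 0‖ ^ 2| := abs_mul _ _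
    _ ≤ |s|⁻¹ * (2 * M * √|s - 0| * √(∫ t in (-1 : ℝ)..1, ‖deriv v t‖ ^ 2)) :=
        mul_le_mul (abs_div_sq_add_sq_le_inv_abs c s)
          (abs_norm_sq_sub_norm_sq_le_sqrt hv (by norm_num) hs hM) (abs_nonneg _) (by positivity)
    _ = _ := by rw [sub_zero, ← hroot]; ring

theorem abs_integral_weight_mul_norm_sq_le {c : ℝ} (hc : c ≠ 0) (hv : ContDiff ℝ 1 v) :
    |∫ s in (-1 : ℝ)..1, s / (c ^ 2 + s ^ 2) * ‖v s‖ ^ 2|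
      ≤ 8 * ((∫ s in (-1 : ℝ)..1, ‖v s‖ ^ 2) + ∫ s in (-1 : ℝ)..1, ‖deriv v s‖ ^ 2) := by
  set N := ∫ s in (-1 : ℝ)..1, ‖v s‖ ^ 2
  set D := ∫ s in (-1 : ℝ)..1, ‖deriv v s‖ ^ 2
  have hN : 0 ≤ N := integral_nonneg (by norm_num) fun _ _ => by positivity
  have hD : 0 ≤ D := integral_nonneg (by norm_num) fun _ _ => by positivity
  set M := √((3 * N + 2 * D) / 2)
  have hM : ∀ t ∈ Icc (-1 : ℝ) 1, ‖v t‖ ≤ M := fun t ht => by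
    have := mul_norm_sq_le_of_contDiff hv ht
    exact Real.le_sqrt_of_sq_le (by norm_num at this; linarith)
  have hweight : Continuous fun s : ℝ => s / (c ^ 2 + s ^ 2) :=
    continuous_id.div (by fun_prop) fun s => by positivity
  have hg : Continuous fun s => ‖v s‖ ^ 2 := hv.continuous.norm.pow 2
  have hcentre : ∫ s in (-1 : ℝ)..1, s / (c ^ 2 + s ^ 2) * ‖v s‖ ^ 2
      = ∫ s in (-1 : ℝ)..1, s / (c ^ 2 + s ^ 2) * (‖v s‖ ^ 2 - ‖v 0‖ ^ 2) := by
    have hodd : ∫ s in (-1 : ℝ)..1, s / (c ^ 2 + s ^ 2) = 0 :=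
      intervalIntegral_eq_zero_of_odd (fun s => by rw [neg_sq, neg_div]) 1
    simp_rw [mul_sub]
    rw [integral_sub (f := fun s => s / (c ^ 2 + s ^ 2) * ‖v s‖ ^ 2)
      (g := fun s => s / (c ^ 2 + s ^ 2) * ‖v 0‖ ^ 2) ((hweight.mul hg).intervalIntegrable _ _)
      ((hweight.mul continuous_const).intervalIntegrable _ _), integral_mul_const, hodd]
    ring
  calc |∫ s in (-1 : ℝ)..1, s / (c ^ 2 + s ^ 2) * ‖v s‖ ^ 2|
      ≤ ∫ s in (-1 : ℝ)..1, |s / (c ^ 2 + s ^ 2) * (‖v s‖ ^ 2 - ‖v 0‖ ^ 2)| := by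
        rw [hcentre]; exact abs_integral_le_integral_abs (by norm_num)
    _ ≤ ∫ s in (-1 : ℝ)..1, 2 * M * √D * |s| ^ (-(1 / 2) : ℝ) :=
        integral_mono_on (by norm_num)
          ((hweight.mul (hg.sub continuous_const)).abs.intervalIntegrable _ _)
          ((intervalIntegrable_abs_rpow (by norm_num) _ _).const_mul _)
          fun s hs => abs_weight_mul_sub_norm_sq_le hv c hs hM
    _ = 8 * M * √D := by rw [integral_const_mul, integral_abs_rpow (by norm_num)]; ring
    _ ≤ 4 * (M ^ 2 + √D ^ 2) := by nlinarith [sq_nonneg (M - √D)]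
    _ ≤ 8 * (N + D) := by
        rw [Real.sq_sqrt hD, Real.sq_sqrt (by positivity)]
        linarith

theorem integral_quadraticForm_eq {c : ℝ} (hc : c ≠ 0) (hv : ContDiff ℝ 1 v) (k ε a b : ℝ) :
    ∫ s in a..b, (‖deriv v s‖ ^ 2 + (k ^ 2 - ε * s / (c ^ 2 + s ^ 2)) * ‖v s‖ ^ 2)
      = (∫ s in a..b, ‖deriv v s‖ ^ 2) + k ^ 2 * (∫ s in a..b, ‖v s‖ ^ 2)
        - ε * ∫ s in a..b, s / (c ^ 2 + s ^ 2) * ‖v s‖ ^ 2 := by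
  have hg : Continuous fun s => ‖v s‖ ^ 2 := hv.continuous.norm.pow 2
  have hweight : Continuous fun s : ℝ => s / (c ^ 2 + s ^ 2) :=
    continuous_id.div (by fun_prop) fun s => by positivity
  have hD : IntervalIntegrable (fun s => ‖deriv v s‖ ^ 2) volume a b :=
    ((hv.continuous_deriv le_rfl).norm.pow 2).intervalIntegrable a b
  have hN : IntervalIntegrable (fun s => k ^ 2 * ‖v s‖ ^ 2) volume a b :=
    (continuous_const.mul hg).intervalIntegrable a b
  have hJ : IntervalIntegrable (fun s => ε * (s / (c ^ 2 + s ^ 2) * ‖v s‖ ^ 2))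
      volume a b :=
    (continuous_const.mul (hweight.mul hg)).intervalIntegrable a b
  simp_rw [fun s => show ‖deriv v s‖ ^ 2 + (k ^ 2 - ε * s / (c ^ 2 + s ^ 2)) * ‖v s‖ ^ 2
      = (‖deriv v s‖ ^ 2 + k ^ 2 * ‖v s‖ ^ 2) - ε * (s / (c ^ 2 + s ^ 2) * ‖v s‖ ^ 2) by ring]
  rw [integral_sub (hD.add hN) hJ, integral_add hD hN, integral_const_mul, integral_const_mul]

end

/-- Fix k > 0 and c ≠ 0. For every C¹ function v : [-1,1] → ℂ and every ε > 0 small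
enough (depending only on k, not on c), the quadratic form
Q(v) = ∫_{-1}^{1} (|v'(s)|² + (k² - ε s/(c² + s²)) |v(s)|²) ds
satisfies Q(v) ≥ 0, with Q(v) > 0 unless v = 0 on [-1,1]. -/
theorem quadratic_form_positive (k : ℝ) (hk : 0 < k) :
    ∃ ε₀ > (0 : ℝ), ∀ ε : ℝ, 0 < ε → ε < ε₀ → ∀ c : ℝ, c ≠ 0 →
      ∀ v : ℝ → ℂ, ContDiff ℝ 1 v →
        (0 ≤ ∫ s in (-1 : ℝ)..1,
            (‖deriv v s‖ ^ 2 + (k ^ 2 - ε * s / (c ^ 2 + s ^ 2)) * ‖v s‖ ^ 2)) ∧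
        ((∃ s ∈ Icc (-1 : ℝ) 1, v s ≠ 0) →
          0 < ∫ s in (-1 : ℝ)..1,
            (‖deriv v s‖ ^ 2 + (k ^ 2 - ε * s / (c ^ 2 + s ^ 2)) * ‖v s‖ ^ 2)) := by
  refine ⟨min 1 (k ^ 2) / 8, by positivity, fun ε hε hεlt c hc v hv => ?_⟩
  have hε1 : 8 * ε < 1 := by linarith [min_le_left 1 (k ^ 2)]
  have hεk : 8 * ε < k ^ 2 := by linarith [min_le_right 1 (k ^ 2)]
  rw [integral_quadraticForm_eq hc hv]
  set N := ∫ s in (-1 : ℝ)..1, ‖v s‖ ^ 2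
  set D := ∫ s in (-1 : ℝ)..1, ‖deriv v s‖ ^ 2
  set J := ∫ s in (-1 : ℝ)..1, s / (c ^ 2 + s ^ 2) * ‖v s‖ ^ 2
  have hD : 0 ≤ D := integral_nonneg (by norm_num) fun _ _ => by positivity
  have hεJ : ε * J ≤ 8 * ε * (N + D) :=
    (mul_le_mul_of_nonneg_left ((le_abs_self J).trans
      (abs_integral_weight_mul_norm_sq_le hc hv)) hε.le).trans_eq (by ring)
  have hlower : (k ^ 2 - 8 * ε) * N ≤ D + k ^ 2 * N - ε * J := by
    nlinarith [mul_nonneg (sub_nonneg.mpr hε1.le) hD]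
  refine ⟨le_trans ?_ hlower, fun ⟨s₀, hs₀, hvs₀⟩ => lt_of_lt_of_le ?_ hlower⟩
  · exact mul_nonneg (by linarith) (integral_nonneg (by norm_num) fun _ _ => by positivity)
  · exact mul_pos (by linarith) (integral_pos (by norm_num)
      (hv.continuous.norm.pow 2).continuousOn (fun _ _ => by positivity) ⟨s₀, hs₀, by positivity⟩)
end
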